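/- Suppose f ∈ Q[x_1,...,x_n] is homogeneous of degree k and f = g·h where g is a symmetric polynomial homogeneous of degree strictly greater than k + 1 − n. Then the divided symmetrization ⟨f⟩_n equals 0. -/

import Mathlib

/-!
Since `g` is symmetric, `⟨g h⟩ = g ⟨h⟩`, and `h` is homogeneous of degree `k - d < n - 1`.
For homogeneous `h` of degree `m`, write the Vandermonde determinant as `V = D Q` with `D` the
denominator. As `w V = sign w • V`, the product `⟨h⟩ V` is the antisymmetrization of `h Q`, a
homogeneous polynomial of degree `m + deg V - (n - 1)`. Antisymmetry kills every monomial with two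
equal exponents, so a nonzero antisymmetric polynomial has degree at least
`0 + 1 + ⋯ + (n - 1) = deg V`. Hence `m < n - 1` forces `⟨h⟩ V = 0`.
-/

open MvPolynomial

/-- The denominator `∏_{i=1}^{n-1} (x_i - x_{i+1})` of divided symmetrization. -/
noncomputable def denomDS (n : ℕ) : MvPolynomial (Fin n) ℚ :=
  ∏ i : Fin (n - 1),
    (X (⟨i.1, by have := i.isLt; omega⟩ : Fin n) - X ⟨i.1 + 1, by have := i.isLt; omega⟩)

/-- Divided symmetrization `⟨f⟩_n = Σ_{w ∈ S_n} w·(f / ∏ (x_i - x_{i+1}))`, as an element of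
the fraction field of `ℚ[x_1,...,x_n]`. -/
noncomputable def DS (n : ℕ) (f : MvPolynomial (Fin n) ℚ) :
    FractionRing (MvPolynomial (Fin n) ℚ) :=
  ∑ w : Equiv.Perm (Fin n),
    algebraMap (MvPolynomial (Fin n) ℚ) _ (rename w f) /
      algebraMap (MvPolynomial (Fin n) ℚ) _ (rename w (denomDS n))

theorem Fin.sum_val_le_sum_of_injective {n : ℕ} {d : Fin n → ℕ} (hd : Function.Injective d) :
    ∑ i : Fin n, (i : ℕ) ≤ ∑ i, d i := by
  have hd' : Function.Injective fun i => (d i : ℤ) := fun i j h => hd (Nat.cast_injective h)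
  have := Finset.sum_range_le_sum (s := Finset.univ.image fun i => (d i : ℤ)) (c := 0) (by simp)
  rw [Finset.sum_image fun i _ j _ h => hd' h, Finset.card_image_of_injective _ hd'] at this
  simp only [zero_add, Finset.card_univ, Fintype.card_fin] at this
  rw [← Nat.cast_sum, ← Nat.cast_sum] at this
  rw [Fin.sum_univ_eq_sum_range (fun i => i)]
  exact_mod_cast this

namespace MvPolynomial

section Homogeneous

variable {σ R : Type*}

theorem IsHomogeneous.homogeneousComponent_add_mul [CommSemiring R] {g : MvPolynomial σ R}
    {d : ℕ} (hg : g.IsHomogeneous d) (h : MvPolynomial σ R) (j : ℕ) :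
    homogeneousComponent (d + j) (g * h) = g * homogeneousComponent j h := by
  let _ := gradedAlgebra (σ := σ) (R := R)
  have := DirectSum.coe_decompose_mul_add_of_left_mem (𝒜 := homogeneousSubmodule σ R)
    (j := j) (b := h) hg
  simpa only [DirectSum.decompose, Equiv.coe_fn_mk, decomposition.decompose'_apply] using this

theorem IsHomogeneous.exists_isHomogeneous_of_mul_left [CommRing R] [NoZeroDivisors R]
    {g h : MvPolynomial σ R} {d k : ℕ}
    (hg : g.IsHomogeneous d) (hgh : (g * h).IsHomogeneous k) (hgh0 : g * h ≠ 0) :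
    ∃ e, d + e = k ∧ h.IsHomogeneous e := by
  have hdeg : ∀ {c}, coeff c h ≠ 0 → d + c.degree = k := by
    intro c hc
    by_contra hne
    have hzero : g * homogeneousComponent c.degree h = 0 := by
      rw [← hg.homogeneousComponent_add_mul, homogeneousComponent_of_mem hgh, if_neg hne]
    apply hc
    simpa [coeff_homogeneousComponent] using
      congrArg (coeff c) ((mul_eq_zero.mp hzero).resolve_left (left_ne_zero_of_mul hgh0))
  obtain ⟨c, hc⟩ := exists_coeff_ne_zero (right_ne_zero_of_mul hgh0)
  refine ⟨c.degree, hdeg hc, fun c' hc' => ?_⟩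
  have hdeg_c := hdeg hc
  have hdeg_c' := hdeg hc'
  rw [Pi.one_def, ← Finsupp.degree_eq_weight_one]
  omega

theorem IsHomogeneous.units_smul [CommRing R] {p : MvPolynomial σ R} {e : ℕ}
    (hp : p.IsHomogeneous e) (u : ℤˣ) : (u • p).IsHomogeneous e := by
  rw [Units.smul_def]
  exact (mem_homogeneousSubmodule _ _).mp (zsmul_mem ((mem_homogeneousSubmodule _ _).mpr hp) _)

end Homogeneous

section Antisymmetric

variable {σ R : Type*} [CommRing R]

theorem coeff_eq_zero_of_rename_swap_eq_neg [NoZeroDivisors R] [CharZero R] [DecidableEq σ]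
    {p : MvPolynomial σ R} {i j : σ} (hp : rename (Equiv.swap i j) p = -p) {c : σ →₀ ℕ}
    (hc : c i = c j) : coeff c p = 0 := by
  have hfix : Finsupp.mapDomain (Equiv.swap i j) c = c := by
    ext k
    rw [← Finsupp.equivMapDomain_eq_mapDomain, Finsupp.equivMapDomain_apply, Equiv.symm_swap]
    rcases eq_or_ne k i with rfl | hki
    · simp [hc]
    rcases eq_or_ne k j with rfl | hkj
    · simp [hc]
    · rw [Equiv.swap_apply_of_ne_of_ne hki hkj]
  have := coeff_rename_mapDomain _ (Equiv.swap i j).injective p c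
  rw [hfix, hp, coeff_neg] at this
  exact CharZero.neg_eq_self_iff.mp this

theorem eq_zero_of_rename_swap_eq_neg_of_isHomogeneous [NoZeroDivisors R] [CharZero R] {n e : ℕ}
    {p : MvPolynomial (Fin n) R} (hp : ∀ i j, i ≠ j → rename (Equiv.swap i j) p = -p)
    (he : p.IsHomogeneous e) (hlt : e < ∑ i : Fin n, (i : ℕ)) : p = 0 := by
  by_contra hp0
  obtain ⟨c, hc⟩ := exists_coeff_ne_zero hp0
  have hinj : Function.Injective c := fun i j hij => by
    by_contra hne
    exact hc (coeff_eq_zero_of_rename_swap_eq_neg (hp i j hne) hij)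
  have hsum := Fin.sum_val_le_sum_of_injective hinj
  have hdeg := he.degree_eq_sum_deg_support (mem_support_iff.mpr hc)
  rw [← Finsupp.degree_apply, Finsupp.degree_eq_sum] at hdeg
  omega

variable [Fintype σ] [DecidableEq σ]

noncomputable def antisymmetrization (p : MvPolynomial σ R) : MvPolynomial σ R :=
  ∑ w : Equiv.Perm σ, Equiv.Perm.sign w • rename w p

theorem rename_antisymmetrization (τ : Equiv.Perm σ) (p : MvPolynomial σ R) :
    rename τ (antisymmetrization p) = Equiv.Perm.sign τ • antisymmetrization p := by
  rw [antisymmetrization, map_sum, Finset.smul_sum,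
    ← Equiv.sum_comp (Equiv.mulLeft τ)
      (fun w => Equiv.Perm.sign τ • Equiv.Perm.sign w • rename w p)]
  refine Finset.sum_congr rfl fun w _ => ?_
  rw [Equiv.coe_mulLeft, smul_smul, Equiv.Perm.sign_mul, ← mul_assoc, Int.units_mul_self, one_mul,
    Equiv.Perm.coe_mul, ← rename_rename, Units.smul_def, Units.smul_def, map_zsmul]

theorem IsHomogeneous.antisymmetrization {p : MvPolynomial σ R} {e : ℕ} (hp : p.IsHomogeneous e) :
    (antisymmetrization p).IsHomogeneous e :=
  IsHomogeneous.sum _ _ _ fun w _ => (hp.rename_isHomogeneous (f := w)).units_smul _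

end Antisymmetric

section Vandermonde

variable (n : ℕ) (R : Type*) [CommRing R]

-- `∏ i, ∏ j > i, (X j - X i)` by `Matrix.det_vandermonde`
noncomputable def vandermonde : MvPolynomial (Fin n) R :=
  (Matrix.vandermonde (X : Fin n → MvPolynomial (Fin n) R)).det

theorem isHomogeneous_vandermonde : (vandermonde n R).IsHomogeneous (∑ i : Fin n, (i : ℕ)) := by
  rw [vandermonde, Matrix.det_apply]
  exact IsHomogeneous.sum _ _ _ fun w _ =>
    (IsHomogeneous.prod _ _ _ fun i _ => isHomogeneous_X_pow _ _).units_smul _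

theorem vandermonde_ne_zero [IsDomain R] : vandermonde n R ≠ 0 :=
  Matrix.det_vandermonde_ne_zero_iff.mpr X_injective

variable {n R}

theorem rename_vandermonde (w : Equiv.Perm (Fin n)) :
    rename w (vandermonde n R) = Equiv.Perm.sign w • vandermonde n R := by
  have hmap : (rename w).mapMatrix (Matrix.vandermonde (X : Fin n → MvPolynomial (Fin n) R)) =
      (Matrix.vandermonde X).submatrix w id := by
    ext i j
    simp [Matrix.vandermonde_apply]
  rw [vandermonde, AlgHom.map_det, hmap, Matrix.det_permute, Units.smul_def, zsmul_eq_mul]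

end Vandermonde

end MvPolynomial

theorem denomDS_succ (m : ℕ) : denomDS (m + 1) = ∏ i : Fin m, (X i.castSucc - X i.succ) := rfl

theorem denomDS_dvd_vandermonde (n : ℕ) : denomDS n ∣ vandermonde n ℚ := by
  cases n with
  | zero => simp [denomDS]
  | succ m =>
    rw [denomDS_succ, vandermonde, Matrix.det_vandermonde, Fin.prod_univ_castSucc]
    refine dvd_mul_of_dvd_left (Finset.prod_dvd_prod_of_dvd _ _ fun i _ => ?_) _
    have := neg_dvd.mpr <|
      Finset.dvd_prod_of_mem (fun j => (X j - X i.castSucc : MvPolynomial (Fin (m + 1)) ℚ))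
        (Finset.mem_Ioi.mpr i.castSucc_lt_succ)
    rwa [neg_sub] at this

theorem isHomogeneous_denomDS (n : ℕ) : (denomDS n).IsHomogeneous (n - 1) := by
  cases n with
  | zero => simpa [denomDS] using isHomogeneous_one (Fin 0) ℚ
  | succ m =>
    rw [denomDS_succ]
    simpa using IsHomogeneous.prod Finset.univ _ (fun _ => 1)
      fun (i : Fin m) _ => (isHomogeneous_X ℚ i.castSucc).sub (isHomogeneous_X ℚ i.succ)

section DividedSymmetrization

variable {n : ℕ}

theorem DS_mul_of_isSymmetric {g : MvPolynomial (Fin n) ℚ} (hg : g.IsSymmetric)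
    (h : MvPolynomial (Fin n) ℚ) : DS n (g * h) = algebraMap _ _ g * DS n h := by
  rw [DS, DS, Finset.mul_sum]
  refine Finset.sum_congr rfl fun w _ => ?_
  rw [map_mul, hg w, map_mul, mul_div_assoc]

theorem DS_mul_vandermonde {Q : MvPolynomial (Fin n) ℚ} (hQ : vandermonde n ℚ = denomDS n * Q)
    (h : MvPolynomial (Fin n) ℚ) :
    DS n h * algebraMap _ _ (vandermonde n ℚ) = algebraMap _ _ (antisymmetrization (h * Q)) := by
  have hD : denomDS n ≠ 0 := ne_zero_of_dvd_ne_zero (vandermonde_ne_zero n ℚ) ⟨Q, hQ⟩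
  rw [DS, Finset.sum_mul, antisymmetrization, map_sum]
  refine Finset.sum_congr rfl fun w _ => ?_
  have hV : vandermonde n ℚ = Equiv.Perm.sign w • (rename w (denomDS n) * rename w Q) := by
    rw [← map_mul, ← hQ, rename_vandermonde, smul_smul, Int.units_mul_self, one_smul]
  have hwD : algebraMap _ (FractionRing (MvPolynomial (Fin n) ℚ)) (rename w (denomDS n)) ≠ 0 := by
    rw [Ne, IsFractionRing.to_map_eq_zero_iff, ← map_zero (rename w)]
    exact (rename_injective _ w.injective).ne hD
  rw [hV, Units.smul_def, Units.smul_def, map_zsmul, map_zsmul, map_mul, map_mul, map_mul,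
    mul_smul_comm]
  congr 1
  field_simp

theorem DS_eq_zero_of_isHomogeneous {h : MvPolynomial (Fin n) ℚ} {m : ℕ}
    (hh : h.IsHomogeneous m) (hm : m + 1 < n) : DS n h = 0 := by
  obtain ⟨Q, hQ⟩ := denomDS_dvd_vandermonde n
  have hV := vandermonde_ne_zero n ℚ
  obtain ⟨e, he, hQe⟩ := (isHomogeneous_denomDS n).exists_isHomogeneous_of_mul_left
    (hQ ▸ isHomogeneous_vandermonde n ℚ) (hQ ▸ hV)
  have hN : antisymmetrization (h * Q) = 0 :=
    eq_zero_of_rename_swap_eq_neg_of_isHomogeneous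
      (fun i j hij => by
        rw [rename_antisymmetrization, Equiv.Perm.sign_swap hij, Units.neg_smul, one_smul])
      (hh.mul hQe).antisymmetrization (by omega)
  have := DS_mul_vandermonde hQ h
  rw [hN, map_zero] at this
  exact (mul_eq_zero.mp this).resolve_right
    (IsFractionRing.to_map_ne_zero_of_mem_nonZeroDivisors (mem_nonZeroDivisors_of_ne_zero hV))

end DividedSymmetrization

/-- If homogeneous `f` of degree `k` has a homogeneous symmetric factor of degree `> k+1-n`,
then `⟨f⟩_n = 0`. -/
theorem stmt3 (n k d : ℕ) (f g h : MvPolynomial (Fin n) ℚ)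
    (hf : f.IsHomogeneous k) (hfac : f = g * h)
    (hgsym : g.IsSymmetric) (hghom : g.IsHomogeneous d)
    (hd : (k : ℤ) + 1 - n < (d : ℤ)) :
    DS n f = 0 := by
  by_cases hf0 : f = 0
  · simp [hf0, DS]
  rw [hfac] at hf hf0 ⊢
  obtain ⟨e, rfl, hh⟩ := hghom.exists_isHomogeneous_of_mul_left hf hf0
  rw [DS_mul_of_isSymmetric hgsym, DS_eq_zero_of_isHomogeneous hh (by omega), mul_zero]
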